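/- arXiv:1810.09954 — 7 statements merged into one kernel-verified Lean document; each statement's English description precedes it below -/
import Mathlib

section
/- Let 𝐠 = {g_t}_{t ∈ ℤ} be a family of permutations of V such that (g_t, g_{t+1}) is a TF-automorphism of Δ for every t ∈ ℤ. Then for each 0 ≤ j ≤ k−1 the map [𝐠]_j sending (i; x_0, …, x_j, …, x_{k-1}) to (i; x_0, …, x_j^{g_t}, …, x_{k-1}), where t = (i − j + k − 1) div k (integer division), is an automorphism of ℤ(Δ,k). -/
/-- Arc relation of the digraph `ℤ(Δ,k)`: vertex set `ℤ × V^k` (coordinates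
indexed by `ZMod k`), with `((i; v), (i+1; w))` an arc iff `v j = w j` for all
`j ≢ i (mod k)` and `(v j, w j)` an arc of `Δ` for `j ≡ i (mod k)`. -/
def ZArc {V : Type*} (E : V → V → Prop) (k : ℕ) [NeZero k]
    (u v : ℤ × (ZMod k → V)) : Prop :=
  v.1 = u.1 + 1 ∧ ∀ j : ZMod k,
    ((u.1 : ZMod k) ≠ j → u.2 j = v.2 j) ∧
    ((u.1 : ZMod k) = j → E (u.2 j) (v.2 j))

private lemma key_div (k a : ℤ) (hk : 0 < k) :
    (a - 1) / k = if k ∣ a then a / k - 1 else a / k := by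
  have h := Int.mul_ediv_add_emod a k
  have hr0 : 0 ≤ a % k := Int.emod_nonneg a hk.ne'
  have hrk : a % k < k := Int.emod_lt_of_pos a hk
  by_cases hd : k ∣ a
  · have hr : a % k = 0 := Int.emod_eq_zero_of_dvd hd
    rw [if_pos hd]
    have h2 : a - 1 = (k - 1) + (a / k - 1) * k := by linear_combination -h + hr
    rw [h2, Int.add_mul_ediv_right _ _ hk.ne',
      Int.ediv_eq_zero_of_lt (by omega) (by omega)]
    ring
  · have hr : a % k ≠ 0 := fun h0 => hd (Int.dvd_of_emod_eq_zero h0)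
    rw [if_neg hd]
    have h2 : a - 1 = (a % k - 1) + (a / k) * k := by linear_combination -h
    rw [h2, Int.add_mul_ediv_right _ _ hk.ne',
      Int.ediv_eq_zero_of_lt (by omega) (by omega), zero_add]

private lemma mod_iff {k : ℕ} [NeZero k] (i : ℤ) (j : ZMod k) :
    (i : ZMod k) = j ↔ (k : ℤ) ∣ (i - (j.val : ℤ)) := by
  rw [← ZMod.intCast_zmod_eq_zero_iff_dvd]
  push_cast [ZMod.natCast_val, ZMod.cast_id]
  rw [sub_eq_zero]

/-- If `{g_t}_{t ∈ ℤ}` is a family of permutations of `V` with `(g_t, g_{t+1})`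
a TF-automorphism of `Δ` for every `t`, then for each `j ∈ ℤ_k` the map
`[𝐠]_j : (i; x₀,…,x_j,…,x_{k-1}) ↦ (i; x₀,…, g_t(x_j), …, x_{k-1})`, where
`t = (i - j + k - 1) div k` (floor division), is an automorphism of `ℤ(Δ,k)`. -/
theorem stmt_6 {V : Type*} (E : V → V → Prop) (k : ℕ) [NeZero k]
    (g : ℤ → Equiv.Perm V)
    (hTF : ∀ t : ℤ, ∀ u v, E u v ↔ E (g t u) (g (t + 1) v)) (j : ZMod k) :
    Function.Bijective
      (fun p : ℤ × (ZMod k → V) => (p.1, fun l : ZMod k =>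
        if l = j then g ((p.1 - (j.val : ℤ) + k - 1).fdiv k) (p.2 l) else p.2 l)) ∧
    ∀ u v : ℤ × (ZMod k → V), ZArc E k u v ↔
      ZArc E k
        (u.1, fun l : ZMod k =>
          if l = j then g ((u.1 - (j.val : ℤ) + k - 1).fdiv k) (u.2 l) else u.2 l)
        (v.1, fun l : ZMod k =>
          if l = j then g ((v.1 - (j.val : ℤ) + k - 1).fdiv k) (v.2 l) else v.2 l) := by
  have hk : 0 < (k : ℤ) := by exact_mod_cast (NeZero.pos k)
  set T : ℤ → ℤ := fun i => (i - (j.val : ℤ) + k - 1).fdiv k with hT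
  have hfd : ∀ n : ℤ, n.fdiv (k : ℤ) = n / k := fun n => Int.fdiv_eq_ediv_of_nonneg n hk.le
  have hstep : ∀ i : ℤ,
      ((i : ZMod k) = j → T (i + 1) = T i + 1) ∧ ((i : ZMod k) ≠ j → T (i + 1) = T i) := by
    intro i
    set a : ℤ := i - (j.val : ℤ) + k with ha
    have h1 : T (i + 1) = a / k := by
      rw [hT]; simp only
      rw [show (i + 1 - (j.val : ℤ) + k - 1 : ℤ) = a by rw [ha]; ring, hfd]
    have h2 : T i = (a - 1) / k := by
      rw [hT]; simp only
      rw [show (i - (j.val : ℤ) + k - 1 : ℤ) = a - 1 by rw [ha]; try ring, hfd]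
    have hdvd : ((k : ℤ) ∣ a) ↔ (k : ℤ) ∣ (i - (j.val : ℤ)) := by
      rw [ha]
      constructor
      · intro h; have := dvd_sub h (dvd_refl (k : ℤ)); simpa using this
      · intro h; exact dvd_add h (dvd_refl _)
    have hkey := key_div (k : ℤ) a hk
    constructor
    · intro hm
      have hd : (k : ℤ) ∣ a := hdvd.mpr ((mod_iff i j).mp hm)
      rw [h1, h2, hkey, if_pos hd]; ring
    · intro hm
      have hd : ¬ (k : ℤ) ∣ a := fun h => hm ((mod_iff i j).mpr (hdvd.mp h))
      rw [h1, h2, hkey, if_neg hd]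
  refine ⟨⟨?_, ?_⟩, ?_⟩
  · rintro ⟨i, x⟩ ⟨i', x'⟩ h
    simp only [Prod.mk.injEq] at h
    obtain ⟨hi, hx⟩ := h
    subst hi
    refine Prod.ext rfl ?_
    funext l
    have hl' := congrFun hx l
    by_cases hl : l = j
    · simp only [if_pos hl] at hl'
      exact (g _).injective hl'
    · simpa [if_neg hl] using hl'
  · rintro ⟨i, y⟩
    refine ⟨⟨i, fun l => if l = j then (g (T i)).symm (y l) else y l⟩, ?_⟩
    simp only [Prod.mk.injEq, true_and]
    funext l
    by_cases hl : l = j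
    · simp [hl, hT]
    · simp [hl]
  · intro u v
    constructor
    · rintro ⟨h1, h2⟩
      refine ⟨h1, fun l => ?_⟩
      obtain ⟨ha, hb⟩ := h2 l
      by_cases hl : l = j
      · subst hl
        simp only [if_pos rfl]
        by_cases hm : (u.1 : ZMod k) = l
        · refine ⟨fun h => absurd hm h, fun _ => ?_⟩
          have ht : T v.1 = T u.1 + 1 := by rw [h1]; exact (hstep u.1).1 hm
          show E (g (T u.1) (u.2 l)) (g (T v.1) (v.2 l))
          rw [ht]
          exact (hTF (T u.1) _ _).mp (hb hm)
        · refine ⟨fun _ => ?_, fun h => absurd h hm⟩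
          have ht : T v.1 = T u.1 := by rw [h1]; exact (hstep u.1).2 hm
          show g (T u.1) (u.2 l) = g (T v.1) (v.2 l)
          rw [ht, ha hm]
      · simp only [if_neg hl]
        exact ⟨ha, hb⟩
    · rintro ⟨h1, h2⟩
      refine ⟨h1, fun l => ?_⟩
      obtain ⟨ha, hb⟩ := h2 l
      by_cases hl : l = j
      · subst hl
        simp only [if_pos rfl] at ha hb
        by_cases hm : (u.1 : ZMod k) = l
        · refine ⟨fun h => absurd hm h, fun _ => ?_⟩
          have ht : T v.1 = T u.1 + 1 := by rw [h1]; exact (hstep u.1).1 hm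
          have hb' : E (g (T u.1) (u.2 l)) (g (T v.1) (v.2 l)) := hb hm
          rw [ht] at hb'
          exact (hTF (T u.1) _ _).mpr hb'
        · refine ⟨fun _ => ?_, fun h => absurd h hm⟩
          have ht : T v.1 = T u.1 := by rw [h1]; exact (hstep u.1).2 hm
          have ha' : g (T u.1) (u.2 l) = g (T v.1) (v.2 l) := ha hm
          rw [ht] at ha'
          exact (g (T u.1)).injective ha'
      · simp only [if_neg hl] at ha hb
        exact ⟨ha, hb⟩
end

section
/- Let H be a ψ-stable subgroup of HAut(Δ). Then for every j ∈ ℤ_k and g ∈ H, the map [g]_{j,ψ} sending (i; x_0, …, x_j, …, x_{k-1}) to (i; x_0, …, x_j^{g^{ψ^t}}, …, x_{k-1}), with t = (i − j + k − 1) div k, is an automorphism of ℤ(Δ,k); moreover for fixed j, g ↦ [g]_{j,ψ} defines a group action of H on ℤ(Δ,k) by automorphisms. -/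
private lemma ediv_sub_one {k m : ℤ} (hk : 0 < k) :
    (m - 1) / k = if k ∣ m then m / k - 1 else m / k := by
  have h0 := Int.emod_nonneg m (by omega : k ≠ 0)
  have h1 := Int.emod_lt_of_pos m hk
  have h2 := Int.mul_ediv_add_emod m k
  have hk' : k ≠ 0 := by omega
  split_ifs with hd
  · have hr : m % k = 0 := Int.emod_eq_zero_of_dvd hd
    have e0 : (m / k - 1) * k = k * (m / k) - k := by ring
    have e : m - 1 = (k - 1) + (m / k - 1) * k := by omega
    rw [e, Int.add_mul_ediv_right _ _ hk',
      Int.ediv_eq_zero_of_lt (by omega) (by omega)]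
    ring
  · have hr : m % k ≠ 0 := fun h => hd (Int.dvd_of_emod_eq_zero h)
    have e0 : (m / k) * k = k * (m / k) := by ring
    have e : m - 1 = (m % k - 1) + (m / k) * k := by omega
    rw [e, Int.add_mul_ediv_right _ _ hk',
      Int.ediv_eq_zero_of_lt (by omega) (by omega)]
    ring

private lemma tkey {k : ℕ} [NeZero k] (j : ZMod k) (i : ℤ) :
    (i + 1 - (j.val : ℤ) + k - 1).fdiv k =
      (i - (j.val : ℤ) + k - 1).fdiv k + (if (i : ZMod k) = j then 1 else 0) := by
  have hk : 0 < (k : ℤ) := by exact_mod_cast Nat.pos_of_ne_zero (NeZero.ne k)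
  rw [Int.fdiv_eq_ediv_of_nonneg _ (le_of_lt hk), Int.fdiv_eq_ediv_of_nonneg _ (le_of_lt hk)]
  have e1 : i + 1 - (j.val : ℤ) + k - 1 = (i - (j.val : ℤ)) + 1 * k := by ring
  have e2 : i - (j.val : ℤ) + k - 1 = ((i - (j.val : ℤ)) - 1) + 1 * k := by ring
  rw [e1, e2, Int.add_mul_ediv_right _ _ (by omega), Int.add_mul_ediv_right _ _ (by omega),
    ediv_sub_one hk]
  have hcond : ((i : ZMod k) = j) ↔ (k : ℤ) ∣ (i - (j.val : ℤ)) := by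
    rw [← ZMod.intCast_zmod_eq_zero_iff_dvd]
    push_cast
    rw [ZMod.natCast_val, ZMod.cast_id, sub_eq_zero]
  simp only [hcond]
  split_ifs with h <;> omega

/-- Let `H ≤ Sym(V)` be a `ψ`-stable subgroup of `HAut(Δ)`, i.e. `ψ` is an
automorphism of `H` with `(g, ψ(g))` a TF-automorphism of `Δ` for all `g ∈ H`.
Then for each `j ∈ ℤ_k` and `g ∈ H`, the map `[g]_{j,ψ}` applying `ψ^t(g)` to
the `j`-th coordinate, with `t = (i - j + k - 1) div k`, is an automorphism of
`ℤ(Δ,k)`, and for fixed `j` this is an action of `H` by automorphisms. -/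
theorem stmt_7 {V : Type*} (E : V → V → Prop) (k : ℕ) [NeZero k]
    (H : Subgroup (Equiv.Perm V)) (ψ : MulAut H)
    (hstable : ∀ g : H, ∀ u v, E u v ↔
      E ((g : Equiv.Perm V) u) (((ψ g : H) : Equiv.Perm V) v))
    (j : ZMod k)
    (M : H → (ℤ × (ZMod k → V)) → ℤ × (ZMod k → V))
    (hM : M = fun g p => (p.1, fun l : ZMod k =>
      if l = j then
        (((ψ ^ ((p.1 - (j.val : ℤ) + k - 1).fdiv k)) g : H) : Equiv.Perm V) (p.2 l)
      else p.2 l)) :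
    (∀ g : H, Function.Bijective (M g) ∧
      ∀ u v : ℤ × (ZMod k → V), ZArc E k u v ↔ ZArc E k (M g u) (M g v)) ∧
    M 1 = id ∧ (∀ g h : H, M (g * h) = M g ∘ M h) := by
  set T : ℤ → ℤ := fun i => (i - (j.val : ℤ) + k - 1).fdiv k with hT
  have hTstep : ∀ i : ℤ, T (i + 1) = T i + (if (i : ZMod k) = j then 1 else 0) :=
    fun i => tkey j i
  have hMfst : ∀ g p, (M g p).1 = p.1 := by intro g p; rw [hM]
  have hMj : ∀ g (p : ℤ × (ZMod k → V)),
      (M g p).2 j = (((ψ ^ T p.1) g : H) : Equiv.Perm V) (p.2 j) := by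
    intro g p; rw [hM]; simp [hT]
  have hMl : ∀ g (p : ℤ × (ZMod k → V)) (l : ZMod k), l ≠ j → (M g p).2 l = p.2 l := by
    intro g p l hl; rw [hM]; simp [hl]
  have hmul : ∀ g h : H, M (g * h) = M g ∘ M h := by
    intro g h
    funext p
    refine Prod.ext (by rw [hMfst, Function.comp_apply, hMfst, hMfst]) ?_
    funext l
    by_cases hl : l = j
    · subst hl
      rw [hMj, Function.comp_apply, hMj, hMj, hMfst, map_mul]
      simp [Equiv.Perm.mul_apply]
    · rw [hMl _ _ _ hl, Function.comp_apply, hMl _ _ _ hl, hMl _ _ _ hl]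
  have hone : M 1 = id := by
    funext p
    refine Prod.ext (by rw [hMfst]; rfl) ?_
    funext l
    by_cases hl : l = j
    · subst hl; rw [hMj, map_one]; simp
    · rw [hMl _ _ _ hl]; rfl
  have harc : ∀ g : H, ∀ u v, ZArc E k u v → ZArc E k (M g u) (M g v) := by
    intro g u v huv
    obtain ⟨h1, h2⟩ := huv
    refine ⟨by rw [hMfst, hMfst, h1], ?_⟩
    intro l
    rw [hMfst]
    by_cases hl : l = j
    · subst hl
      constructor
      · intro hne
        rw [hMj, hMj, h1, hTstep, if_neg hne, add_zero]
        exact congrArg _ ((h2 l).1 hne)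
      · intro heq
        rw [hMj, hMj, h1, hTstep, if_pos heq]
        have hpsi : ((ψ ^ (T u.1 + 1)) g) = ψ ((ψ ^ (T u.1)) g) := by
          rw [add_comm, zpow_add, zpow_one, MulAut.mul_apply]
        rw [hpsi]
        exact (hstable _ _ _).1 ((h2 l).2 heq)
    · rw [hMl _ _ _ hl, hMl _ _ _ hl]
      exact h2 l
  refine ⟨?_, hone, hmul⟩
  intro g
  have hc1 : ∀ u, M g⁻¹ (M g u) = u := by
    intro u
    rw [← Function.comp_apply (f := M g⁻¹), ← hmul, inv_mul_cancel, hone]; rfl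
  have hc2 : ∀ u, M g (M g⁻¹ u) = u := by
    intro u
    rw [← Function.comp_apply (f := M g), ← hmul, mul_inv_cancel, hone]; rfl
  refine ⟨Function.bijective_iff_has_inverse.2 ⟨M g⁻¹, hc1, hc2⟩, ?_⟩
  intro u v
  refine ⟨harc g u v, fun h => ?_⟩
  have h' := harc g⁻¹ _ _ h
  rwa [hc1, hc1] at h'
end

section
/- The complete digraph K⃗_d (d ≥ 2) is stable: for each vertex x, the pair {(x,0),(x,1)} is a block of imprimitivity for the action of Aut(CDHC(K⃗_d)) on the vertices of CDHC(K⃗_d). -/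
/-- `f` is an automorphism of the digraph with arc relation `E`. -/
def IsAut {α : Type*} (E : α → α → Prop) (f : α ≃ α) : Prop :=
  ∀ u v, E u v ↔ E (f u) (f v)

/-- `γ` is a `k`-arc of the digraph with arc relation `E`. -/
def IsKArc {α : Type*} (E : α → α → Prop) (k : ℕ) (γ : Fin (k+1) → α) : Prop :=
  ∀ i : Fin k, E (γ i.castSucc) (γ i.succ)

/-- The automorphism group acts transitively on `k`-arcs. -/
def KArcTransitive {α : Type*} (E : α → α → Prop) (k : ℕ) : Prop :=
  ∀ γ₁ γ₂ : Fin (k+1) → α, IsKArc E k γ₁ → IsKArc E k γ₂ →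
    ∃ f : α ≃ α, IsAut E f ∧ ∀ m, f (γ₁ m) = γ₂ m

/-- Arc relation of the canonical double half-cover `CDHC(Δ)`:
arcs are `((x,0),(y,1))` with `(x,y)` an arc of `Δ`. -/
def CDHCArc {V : Type*} (E : V → V → Prop) (p q : V × ZMod 2) : Prop :=
  p.2 = 0 ∧ q.2 = 1 ∧ E p.1 q.1

/-- `Δ` is stable: each pair `{(x,0),(x,1)}` is a block of imprimitivity of
`Aut(CDHC(Δ))`. -/
def Stable {V : Type*} (E : V → V → Prop) : Prop :=
  ∀ f : (V × ZMod 2) ≃ (V × ZMod 2), IsAut (CDHCArc E) f →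
    ∀ x : V, (⇑f '' {(x, 0), (x, 1)} = {(x, 0), (x, 1)}) ∨
      (⇑f '' {(x, 0), (x, 1)} ∩ {(x, 0), (x, 1)} = ∅)

/-- The complete digraph `K⃗_d` (`d ≥ 2`, arcs `(v,w)` for all `v ≠ w`) is
stable: each `{(x,0),(x,1)}` is a block of imprimitivity of
`Aut(CDHC(K⃗_d))`. -/
theorem stmt_11 (d : ℕ) (hd : 2 ≤ d) :
    Stable (fun v w : Fin d => v ≠ w) := by
  intro f hf x
  have exy : ∀ z : Fin d, ∃ y : Fin d, z ≠ y := by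
    intro z
    obtain ⟨y, hy⟩ := Fintype.exists_ne_of_one_lt_card (by simp; omega) z
    exact ⟨y, hy.symm⟩
  have h0 : ∀ z : Fin d, (f (z, 0)).2 = 0 := by
    intro z
    obtain ⟨y, hy⟩ := exy z
    exact ((hf (z, 0) (y, 1)).mp ⟨rfl, rfl, hy⟩).1
  have h1 : ∀ z : Fin d, (f (z, 1)).2 = 1 := by
    intro z
    obtain ⟨y, hy⟩ := exy z
    exact ((hf (y, 0) (z, 1)).mp ⟨rfl, rfl, hy.symm⟩).2.1
  have hστ : ∀ z : Fin d, (f (z, 0)).1 = (f (z, 1)).1 := by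
    intro z
    by_contra h
    exact ((hf (z, 0) (z, 1)).mpr ⟨h0 z, h1 z, h⟩).2.2 rfl
  have hfa : f (x, 0) = ((f (x, 0)).1, 0) := Prod.ext rfl (h0 x)
  have hfb : f (x, 1) = ((f (x, 0)).1, 1) := Prod.ext (hστ x).symm (h1 x)
  rcases eq_or_ne (f (x, 0)).1 x with h | h
  · left; rw [Set.image_pair, hfa, hfb, h]
  · right
    rw [Set.image_pair, hfa, hfb]
    ext p
    simp only [Set.mem_inter_iff, Set.mem_insert_iff, Set.mem_singleton_iff,
      Set.mem_empty_iff_false, iff_false, not_and, Prod.mk.injEq]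
    rintro (rfl | rfl) <;> rintro (he | he) <;>
      exact h (congrArg Prod.fst he)
end

section
/- For 3 ≤ n ≤ ∞, the digraph ℤ(Θ_n, k) is k-arc-transitive but not (k+1)-arc-transitive. Specifically, any automorphism fixing the k-arc (0;0,…,0), (1;0,…,0), …, (k;0,…,0) pointwise must also fix both out-neighbours (k+1;0,0,…,0) and (k+1;1,0,…,0) of its terminal vertex. -/
/-- Arc relation of `Θ_n`: directed cycle on `ℤ_n` (for `n = 0` this is
`ZMod 0 = ℤ`, i.e. `Θ_∞`, the directed line) with a loop at every vertex. -/
def ThetaArc (n : ℕ) (x y : ZMod n) : Prop := y = x + 1 ∨ y = x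

/-!
The arc relation of `ℤ(Δ,k)` changes coordinate `l` only at the times `i ≡ l (mod k)`, so along
a `k`-arc every coordinate moves exactly once, by one arc of `Θ_n` (a loop or a step
`x ↦ x + 1`). Besides the time shifts, `ℤ(Θ_n,k)` has automorphisms acting on each coordinate
`l` by a translation or by a reflection `x ↦ c + e - x`, where `e` counts the moves of
coordinate `l` so far; a reflection exchanges loops and steps. Composing these maps any `k`-arc
to the constant one.

Along a `(k+1)`-arc coordinate `0` moves twice, at times `0` and `k`. When `2 ≠ 0` in `ℤ_n` a
move and its reverse are both arcs of `Θ_n` only if both are loops, so the constant `(k+1)`-arc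
is the only one from `(0;0,…,0)` to `(k+1;0,…,0)`, while `(k+1;1,0,…,0)` is reached by two of
them (the step made at time `0` or at time `k`). An automorphism fixing the constant `k`-arc
therefore cannot send `(k+1;1,0,…,0)` to `(k+1;0,…,0)`, and it fixes both out-neighbours of
`(k;0,…,0)`.
-/

section Automorphisms

variable {α : Type*} {E : α → α → Prop}

theorem IsAut.symm {f : α ≃ α} (hf : IsAut E f) : IsAut E f.symm := fun u v => by
  simpa using (hf (f.symm u) (f.symm v)).symm

theorem IsAut.trans {f g : α ≃ α} (hf : IsAut E f) (hg : IsAut E g) : IsAut E (f.trans g) :=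
  fun u v => (hf u v).trans (hg (f u) (f v))

theorem IsKArc.map {f : α ≃ α} {K : ℕ} {γ : Fin (K + 1) → α} (hf : IsAut E f)
    (hγ : IsKArc E K γ) : IsKArc E K (f ∘ γ) :=
  fun i => (hf _ _).1 (hγ i)

theorem kArcTransitive_of_forall_exists_isAut {K : ℕ} (γ₀ : Fin (K + 1) → α)
    (h : ∀ γ, IsKArc E K γ → ∃ f : α ≃ α, IsAut E f ∧ ∀ m, f (γ m) = γ₀ m) :
    KArcTransitive E K := by
  intro γ₁ γ₂ h₁ h₂
  obtain ⟨f₁, hf₁, he₁⟩ := h γ₁ h₁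
  obtain ⟨f₂, hf₂, he₂⟩ := h γ₂ h₂
  exact ⟨f₁.trans f₂.symm, hf₁.trans hf₂.symm, fun m => by simp [he₁, ← he₂]⟩

end Automorphisms

theorem Int.add_one_ediv (x : ℤ) {k : ℤ} (hk : 0 < k) :
    (x + 1) / k = x / k + if k ∣ x + 1 then 1 else 0 := by
  have hq := (Int.ediv_eq_iff_of_pos hk).1 (rfl : x / k = x / k)
  rw [Int.ediv_eq_iff_of_pos hk]
  split_ifs with hd
  · obtain ⟨d, hd⟩ := hd
    have h1 : x / k < d := by nlinarith
    have h2 : d ≤ x / k + 1 := by nlinarith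
    constructor <;> nlinarith
  · exact ⟨by linarith, lt_of_le_of_ne (by linarith) fun h => hd ⟨x / k + 1, by linarith⟩⟩

theorem ZMod.natCast_ne_of_lt {k t : ℕ} [NeZero k] {j : ZMod k} (ht : t < k) (hj : t ≠ j.val) :
    (t : ZMod k) ≠ j := fun h => hj (h ▸ (ZMod.val_natCast_of_lt ht).symm)

theorem ZMod.two_ne_zero_of_eq_zero_or_three_le {n : ℕ} (hn : n = 0 ∨ 3 ≤ n) :
    (2 : ZMod n) ≠ 0 := by
  rcases hn with rfl | hn
  · exact two_ne_zero (α := ℤ)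
  · intro h
    have := (ZMod.natCast_eq_zero_iff 2 n).1 (by exact_mod_cast h)
    exact absurd (Nat.le_of_dvd two_pos this) (by omega)

namespace ZArc

variable {V : Type*} {E : V → V → Prop} {k : ℕ}

def shiftEquiv (V : Type*) (k : ℕ) (a : ℤ) : (ℤ × (ZMod k → V)) ≃ (ℤ × (ZMod k → V)) where
  toFun p := (p.1 + a, fun l => p.2 (l - a))
  invFun p := (p.1 - a, fun l => p.2 (l + a))
  left_inv p := by simp
  right_inv p := by simp

@[simp]
theorem shiftEquiv_apply (a : ℤ) (p : ℤ × (ZMod k → V)) :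
    shiftEquiv V k a p = (p.1 + a, fun l => p.2 (l - a)) :=
  rfl

theorem isAut_shiftEquiv [NeZero k] (a : ℤ) : IsAut (ZArc E k) (shiftEquiv V k a) := by
  rintro ⟨i, v⟩ ⟨i', w⟩
  simp only [shiftEquiv_apply, ZArc]
  refine and_congr (by omega) ((Equiv.addRight (a : ZMod k)).forall_congr fun j => ?_)
  simp [Int.cast_add]

/-- For `i ≥ 0`, the number of moves of coordinate `l` made before time `i`, i.e. the number of
`t ∈ [0, i)` with `t ≡ l (mod k)`. -/
def epoch (k : ℕ) (l : ZMod k) (i : ℤ) : ℤ := (i + k - 1 - l.val) / k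

theorem epoch_add_one [NeZero k] (l : ZMod k) (i : ℤ) :
    epoch k l (i + 1) = epoch k l i + if (i : ZMod k) = l then 1 else 0 := by
  have hk : (0 : ℤ) < k := by exact_mod_cast Nat.pos_of_neZero k
  have hdvd : (k : ℤ) ∣ i + k - 1 - l.val + 1 ↔ (i : ZMod k) = l := by
    rw [show i + k - 1 - l.val + 1 = k - (l.val - i) by ring, dvd_sub_right dvd_rfl,
      ← ZMod.intCast_eq_intCast_iff_dvd_sub, Int.cast_natCast, ZMod.natCast_zmod_val]
  rw [epoch, epoch, show i + 1 + k - 1 - l.val = i + k - 1 - l.val + 1 by ring,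
    Int.add_one_ediv _ hk, if_congr hdvd rfl rfl]

theorem epoch_of_le [NeZero k] {l : ZMod k} {i : ℤ} (h₀ : 0 ≤ i) (h : i ≤ l.val) :
    epoch k l i = 0 := by
  have hl := l.val_lt
  rw [epoch, Int.ediv_eq_iff_of_pos (by omega)]
  omega

theorem epoch_of_lt [NeZero k] {l : ZMod k} {i : ℤ} (h : l.val < i) (hk : i ≤ k) :
    epoch k l i = 1 := by
  have hl := l.val_lt
  rw [epoch, Int.ediv_eq_iff_of_pos (by omega)]
  omega

def coordEquiv (φ : ZMod k → ℤ → V ≃ V) : (ℤ × (ZMod k → V)) ≃ (ℤ × (ZMod k → V)) :=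
  Equiv.prodShear (Equiv.refl ℤ) fun i => Equiv.piCongrRight fun l => φ l (epoch k l i)

@[simp]
theorem coordEquiv_apply (φ : ZMod k → ℤ → V ≃ V) (p : ℤ × (ZMod k → V)) :
    coordEquiv φ p = (p.1, fun l => φ l (epoch k l p.1) (p.2 l)) :=
  rfl

theorem isAut_coordEquiv [NeZero k] {φ : ZMod k → ℤ → V ≃ V}
    (hφ : ∀ l e x y, E x y ↔ E (φ l e x) (φ l (e + 1) y)) :
    IsAut (ZArc E k) (coordEquiv φ) := by
  rintro ⟨i, v⟩ ⟨i', w⟩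
  simp only [coordEquiv_apply, ZArc]
  refine and_congr_right fun hi => forall_congr' fun j => ?_
  rw [hi, epoch_add_one]
  by_cases h : (i : ZMod k) = j
  · simp [h, ← hφ]
  · simp [h, (φ j _).injective.eq_iff]

end ZArc

section Theta

variable {n k : ℕ}

theorem thetaArc_add_right_iff (c x y : ZMod n) : ThetaArc n (x + c) (y + c) ↔ ThetaArc n x y := by
  simp only [ThetaArc, add_right_comm x c 1, add_left_inj]

theorem thetaArc_sub_left_iff (c x y : ZMod n) :
    ThetaArc n (c - x) (c + 1 - y) ↔ ThetaArc n x y := by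
  simp only [ThetaArc]
  constructor <;> rintro (h | h) <;> [right; left; right; left] <;> linear_combination -h

theorem ThetaArc.antisymm (h2 : (2 : ZMod n) ≠ 0) {x y : ZMod n} (hxy : ThetaArc n x y)
    (hyx : ThetaArc n y x) : x = y := by
  rcases hxy with hxy | hxy
  · exfalso
    rcases hyx with hyx | hyx
    · exact h2 (by linear_combination -hxy - hyx)
    · exact h2 (by linear_combination -2 * hxy - 2 * hyx)
  · exact hxy.symm

theorem single_zero_one_ne_zero (h2 : (2 : ZMod n) ≠ 0) :
    (Pi.single 0 1 : ZMod k → ZMod n) ≠ 0 := by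
  rw [Ne, Pi.single_eq_zero_iff]
  intro h
  exact h2 (by rw [← one_add_one_eq_two, h, add_zero])

theorem zArc_thetaArc_iff [NeZero k] (i : ℤ) (v : ZMod k → ZMod n) (w : ℤ × (ZMod k → ZMod n)) :
    ZArc (ThetaArc n) k (i, v) w ↔
      w = (i + 1, v) ∨ w = (i + 1, Function.update v (i : ZMod k) (v i + 1)) := by
  obtain ⟨i', w⟩ := w
  simp only [ZArc, Prod.mk.injEq, ThetaArc]
  constructor
  · rintro ⟨rfl, hw⟩
    have hne : ∀ j ≠ (i : ZMod k), w j = v j := fun j hj => ((hw j).1 (Ne.symm hj)).symm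
    rcases (hw i).2 rfl with h | h
    · exact Or.inr ⟨rfl, Function.eq_update_iff.2 ⟨h, hne⟩⟩
    · refine Or.inl ⟨rfl, funext fun j => ?_⟩
      by_cases hj : j = i
      · rw [hj, h]
      · exact hne j hj
  · rintro (⟨rfl, rfl⟩ | ⟨rfl, rfl⟩)
    · exact ⟨rfl, fun j => ⟨fun _ => rfl, fun _ => Or.inr rfl⟩⟩
    · refine ⟨rfl, fun j => ⟨fun hj => (Function.update_of_ne (Ne.symm hj) _ _).symm, ?_⟩⟩
      rintro rfl
      exact Or.inl (Function.update_self _ _ _)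

end Theta

section KArc

variable {V : Type*} {E : V → V → Prop} {k : ℕ} [NeZero k]

section

variable {K : ℕ} {γ : Fin (K + 1) → ℤ × (ZMod k → V)}

theorem IsKArc.fst_eq (h : IsKArc (ZArc E k) K γ) (m : Fin (K + 1)) :
    (γ m).1 = (γ 0).1 + m := by
  induction m using Fin.induction with
  | zero => simp
  | succ i ih =>
    rw [(h i).1, ih]
    simp [add_assoc]

theorem IsKArc.cast_fst_castSucc (h : IsKArc (ZArc E k) K γ) (h₀ : (γ 0).1 = 0)
    (i : Fin K) : ((γ i.castSucc).1 : ZMod k) = (i : ℕ) := by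
  rw [h.fst_eq, h₀, zero_add, Fin.val_castSucc, Int.cast_natCast]

theorem IsKArc.snd_eq_of_forall_ne (h : IsKArc (ZArc E k) K γ) {j : ZMod k}
    {a b : Fin (K + 1)} (hab : a ≤ b)
    (hne : ∀ i : Fin K, a ≤ i.castSucc → i.castSucc < b → ((γ i.castSucc).1 : ZMod k) ≠ j) :
    (γ b).2 j = (γ a).2 j := by
  induction b using Fin.induction with
  | zero => rw [le_antisymm hab (Fin.zero_le a)]
  | succ i ih =>
    rcases hab.lt_or_eq with hlt | rfl
    · have hai : a ≤ i.castSucc := Fin.le_castSucc_iff.2 hlt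
      rw [← ih hai fun t h₁ h₂ => hne t h₁ (h₂.trans Fin.castSucc_lt_succ)]
      exact (((h i).2 j).1 (hne i hai Fin.castSucc_lt_succ)).symm
    · rfl

end

variable {γ : Fin (k + 1) → ℤ × (ZMod k → V)}

theorem IsKArc.snd_eq_ite (h : IsKArc (ZArc E k) k γ) (h₀ : (γ 0).1 = 0) (m : Fin (k + 1))
    (l : ZMod k) :
    (γ m).2 l = if (m : ℕ) ≤ l.val then (γ 0).2 l else (γ (Fin.last k)).2 l := by
  split_ifs with hm
  · refine h.snd_eq_of_forall_ne (Fin.zero_le m) fun i _ him => ?_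
    rw [h.cast_fst_castSucc h₀]
    rw [Fin.lt_def, Fin.val_castSucc] at him
    exact ZMod.natCast_ne_of_lt i.isLt (by omega)
  · refine (h.snd_eq_of_forall_ne (Fin.le_last m) fun i hmi _ => ?_).symm
    rw [h.cast_fst_castSucc h₀]
    rw [Fin.le_def, Fin.val_castSucc] at hmi
    exact ZMod.natCast_ne_of_lt i.isLt (by omega)

theorem IsKArc.rel_snd_zero_last (h : IsKArc (ZArc E k) k γ) (h₀ : (γ 0).1 = 0) (l : ZMod k) :
    E ((γ 0).2 l) ((γ (Fin.last k)).2 l) := by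
  have hstep := ((h ⟨l.val, l.val_lt⟩).2 l).2 (by rw [h.cast_fst_castSucc h₀]; simp)
  rwa [h.snd_eq_ite h₀ (Fin.castSucc _), h.snd_eq_ite h₀ (Fin.succ _), if_pos (by simp),
    if_neg (by simp)] at hstep

theorem IsKArc.snd_eq_of_ne_zero {γ : Fin (k + 1 + 1) → ℤ × (ZMod k → V)}
    (h : IsKArc (ZArc E k) (k + 1) γ) (h₀ : (γ 0).1 = 0) {j : ZMod k} (hj : j ≠ 0)
    (hend : (γ (Fin.last (k + 1))).2 j = (γ 0).2 j) (m : Fin (k + 1 + 1)) :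
    (γ m).2 j = (γ 0).2 j := by
  have := j.val_lt
  by_cases hm : (m : ℕ) ≤ j.val
  · refine h.snd_eq_of_forall_ne (Fin.zero_le m) fun i _ him => ?_
    rw [Fin.lt_def, Fin.val_castSucc] at him
    rw [h.cast_fst_castSucc h₀]
    exact ZMod.natCast_ne_of_lt (by omega) (by omega)
  · rw [← hend]
    refine (h.snd_eq_of_forall_ne (Fin.le_last m) fun i hmi _ => ?_).symm
    rw [Fin.le_def, Fin.val_castSucc] at hmi
    rw [h.cast_fst_castSucc h₀]
    rcases Nat.lt_or_ge i k with hi | hi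
    · exact ZMod.natCast_ne_of_lt hi (by omega)
    · rw [show (i : ℕ) = k by omega, ZMod.natCast_self]
      exact hj.symm

end KArc

section Transitivity

variable {n k : ℕ} [NeZero k]

theorem exists_isAut_apply_eq_of_fst_eq_zero {γ : Fin (k + 1) → ℤ × (ZMod k → ZMod n)}
    (h : IsKArc (ZArc (ThetaArc n) k) k γ) (h₀ : (γ 0).1 = 0) :
    ∃ f, IsAut (ZArc (ThetaArc n) k) f ∧ ∀ m, f (γ m) = ((m : ℤ), 0) := by
  set x := (γ 0).2 with hx
  set y := (γ (Fin.last k)).2 with hy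
  let φ : ZMod k → ℤ → ZMod n ≃ ZMod n := fun l e =>
    if y l = x l + 1 then Equiv.subLeft (x l + e) else Equiv.addRight (-x l)
  have hφ : ∀ l e a b, ThetaArc n a b ↔ ThetaArc n (φ l e a) (φ l (e + 1) b) := by
    intro l e a b
    by_cases hl : y l = x l + 1
    · simp only [φ, if_pos hl, Equiv.subLeft_apply, Int.cast_add, Int.cast_one, ← add_assoc]
      exact (thetaArc_sub_left_iff _ a b).symm
    · simp only [φ, if_neg hl, Equiv.coe_addRight]
      exact (thetaArc_add_right_iff _ a b).symm
  refine ⟨ZArc.coordEquiv φ, ZArc.isAut_coordEquiv hφ, fun m => ?_⟩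
  rw [ZArc.coordEquiv_apply, h.fst_eq, h₀, zero_add]
  refine Prod.ext rfl (funext fun l => ?_)
  have hxy := h.rel_snd_zero_last h₀ l
  dsimp only
  rw [h.snd_eq_ite h₀, ← hx, ← hy]
  by_cases hml : (m : ℕ) ≤ l.val
  · rw [if_pos hml, ZArc.epoch_of_le (by omega) (by omega)]
    by_cases hl : y l = x l + 1 <;> simp [φ, hl]
  · rw [if_neg hml, ZArc.epoch_of_lt (by omega) (by omega)]
    by_cases hl : y l = x l + 1
    · simp [φ, hl]
    · simp only [φ, if_neg hl, Equiv.coe_addRight, show y l = x l from hxy.resolve_left hl,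
        add_neg_cancel, Pi.zero_apply]

theorem exists_isAut_apply_eq {γ : Fin (k + 1) → ℤ × (ZMod k → ZMod n)}
    (h : IsKArc (ZArc (ThetaArc n) k) k γ) :
    ∃ f, IsAut (ZArc (ThetaArc n) k) f ∧ ∀ m, f (γ m) = ((m : ℤ), 0) := by
  have hs := ZArc.isAut_shiftEquiv (E := ThetaArc n) (k := k) (-(γ 0).1)
  obtain ⟨f, hf, hfγ⟩ := exists_isAut_apply_eq_of_fst_eq_zero (h.map hs) (by simp)
  exact ⟨(ZArc.shiftEquiv _ k (-(γ 0).1)).trans f, hs.trans hf, hfγ⟩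

theorem kArcTransitive_zArc_thetaArc : KArcTransitive (ZArc (ThetaArc n) k) k :=
  kArcTransitive_of_forall_exists_isAut _ fun _ => exists_isAut_apply_eq

end Transitivity

section Rigidity

variable {n k : ℕ} [NeZero k]

def constArc (n k K : ℕ) : Fin (K + 1) → ℤ × (ZMod k → ZMod n) := fun m => ((m : ℤ), 0)

def jumpArc (n k t : ℕ) : Fin (k + 1 + 1) → ℤ × (ZMod k → ZMod n) :=
  fun m => ((m : ℤ), if t < (m : ℕ) then Pi.single 0 1 else 0)

theorem isKArc_constArc (K : ℕ) : IsKArc (ZArc (ThetaArc n) k) K (constArc n k K) := fun i => by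
  simp [constArc, zArc_thetaArc_iff, Fin.val_succ]

theorem isKArc_jumpArc {t : ℕ} (ht : (t : ZMod k) = 0) :
    IsKArc (ZArc (ThetaArc n) k) (k + 1) (jumpArc n k t) := by
  intro i
  simp only [jumpArc, zArc_thetaArc_iff, Fin.val_succ, Fin.val_castSucc, Nat.cast_add, Nat.cast_one,
    Prod.mk.injEq, true_and]
  rcases lt_trichotomy t i with hti | rfl | hti
  · left
    simp [hti, hti.trans (Nat.lt_succ_self _)]
  · right
    simp [ht]
    rfl
  · left
    simp [hti.not_gt, Nat.lt_succ_iff.not.2 hti.not_ge]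

theorem IsKArc.snd_zero_eq (h2 : (2 : ZMod n) ≠ 0) {γ : Fin (k + 1 + 1) → ℤ × (ZMod k → ZMod n)}
    (h : IsKArc (ZArc (ThetaArc n) k) (k + 1) γ) (h₀ : (γ 0).1 = 0)
    (hend : (γ (Fin.last (k + 1))).2 0 = (γ 0).2 0) (m : Fin (k + 1 + 1)) :
    (γ m).2 0 = (γ 0).2 0 := by
  have hconst : ∀ m : Fin (k + 1 + 1), 1 ≤ m → (m : ℕ) ≤ k → (γ m).2 0 = (γ 1).2 0 :=
    fun m hm₁ hmk => h.snd_eq_of_forall_ne hm₁ fun i hi₁ hi => by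
      rw [Fin.le_def, Fin.val_one, Fin.val_castSucc] at hi₁
      rw [Fin.lt_def, Fin.val_castSucc] at hi
      rw [h.cast_fst_castSucc h₀]
      exact ZMod.natCast_ne_of_lt (by omega) (by rw [ZMod.val_zero]; omega)
  -- coordinate `0` moves at times `0` and `k`, and these two moves cancel
  have hmid : (γ 1).2 0 = (γ 0).2 0 := by
    have hstep₀ := ((h 0).2 0).2 (by rw [h.cast_fst_castSucc h₀]; simp)
    have hstepₖ := ((h (Fin.last k)).2 0).2 (by rw [h.cast_fst_castSucc h₀]; simp)
    rw [Fin.castSucc_zero, Fin.succ_zero_eq_one] at hstep₀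
    rw [Fin.succ_last, hend, hconst _ (Fin.le_def.2 ?_) (by simp)] at hstepₖ
    · exact (ThetaArc.antisymm h2 hstep₀ hstepₖ).symm
    rw [Fin.val_one, Fin.val_castSucc, Fin.val_last]
    exact Nat.pos_of_neZero k
  by_cases hm₀ : m = 0
  · rw [hm₀]
  by_cases hml : m = Fin.last (k + 1)
  · rw [hml, hend]
  have h₁ : (m : ℕ) ≠ 0 := fun h => hm₀ (Fin.ext h)
  have h₂ : (m : ℕ) ≠ k + 1 := fun h => hml (Fin.ext h)
  rw [hconst m (Fin.le_def.2 (by rw [Fin.val_one]; omega)) (by omega), hmid]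

theorem IsKArc.eq_constArc (h2 : (2 : ZMod n) ≠ 0) {γ : Fin (k + 1 + 1) → ℤ × (ZMod k → ZMod n)}
    (h : IsKArc (ZArc (ThetaArc n) k) (k + 1) γ) (h₀ : γ 0 = (0, 0))
    (hlast : γ (Fin.last (k + 1)) = ((k : ℤ) + 1, 0)) : γ = constArc n k (k + 1) := by
  have hfst₀ : (γ 0).1 = 0 := by rw [h₀]
  have hend : (γ (Fin.last (k + 1))).2 = (γ 0).2 := by rw [h₀, hlast]
  funext m
  refine Prod.ext (by rw [h.fst_eq, hfst₀, zero_add]; rfl) (funext fun j => ?_)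
  by_cases hj : j = 0
  · rw [hj, h.snd_zero_eq h2 hfst₀ (congrFun hend 0), h₀]
    rfl
  · rw [h.snd_eq_of_ne_zero hfst₀ hj (congrFun hend j), h₀]
    rfl

theorem IsAut.apply_single_ne (h2 : (2 : ZMod n) ≠ 0)
    {f : (ℤ × (ZMod k → ZMod n)) ≃ (ℤ × (ZMod k → ZMod n))} (hf : IsAut (ZArc (ThetaArc n) k) f)
    (hf₀ : f (0, 0) = (0, 0)) : f ((k : ℤ) + 1, Pi.single 0 1) ≠ ((k : ℤ) + 1, 0) := by
  intro hf₁
  have hjump : ∀ t < k + 1, (t : ZMod k) = 0 → f ∘ jumpArc n k t = constArc n k (k + 1) :=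
    fun t ht ht₀ => ((isKArc_jumpArc ht₀).map hf).eq_constArc h2
      (by simpa [jumpArc] using hf₀) (by simpa [jumpArc, ht] using hf₁)
  have h1 := congrFun ((hjump 0 (by omega) Nat.cast_zero).trans
    (hjump k (by omega) (ZMod.natCast_self k)).symm) 1
  have := f.injective h1
  simp only [jumpArc, Fin.val_one, Nat.cast_one, Nat.lt_one_iff, Prod.mk.injEq, true_and, if_true,
    if_neg (NeZero.ne k)] at this
  exact single_zero_one_ne_zero h2 this

theorem IsAut.fix_outNeighbours (h2 : (2 : ZMod n) ≠ 0)
    {f : (ℤ × (ZMod k → ZMod n)) ≃ (ℤ × (ZMod k → ZMod n))} (hf : IsAut (ZArc (ThetaArc n) k) f)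
    (hfix : ∀ m : Fin (k + 1), f ((m : ℤ), 0) = ((m : ℤ), 0)) :
    f ((k : ℤ) + 1, 0) = ((k : ℤ) + 1, 0) ∧
      f ((k : ℤ) + 1, Pi.single 0 1) = ((k : ℤ) + 1, Pi.single 0 1) := by
  have hf₀ : f (0, 0) = (0, 0) := by simpa using hfix 0
  have hfₖ : f ((k : ℤ), 0) = ((k : ℤ), 0) := by simpa using hfix (Fin.last k)
  have hout : ∀ w, ZArc (ThetaArc n) k ((k : ℤ), 0) w ↔
      w = ((k : ℤ) + 1, 0) ∨ w = ((k : ℤ) + 1, Pi.single 0 1) := fun w => by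
    rw [zArc_thetaArc_iff, Int.cast_natCast, ZMod.natCast_self, Pi.zero_apply, zero_add]
    rfl
  have hmaps : ∀ w, ZArc (ThetaArc n) k ((k : ℤ), 0) w → ZArc (ThetaArc n) k ((k : ℤ), 0) (f w) :=
    fun w hw => hfₖ ▸ (hf _ _).1 hw
  have hA := (hout _).1 (hmaps _ ((hout _).2 (Or.inl rfl)))
  have hB := ((hout _).1 (hmaps _ ((hout _).2 (Or.inr rfl)))).resolve_left
    (hf.apply_single_ne h2 hf₀)
  refine ⟨hA.resolve_right fun h => ?_, hB⟩
  have := congrArg Prod.snd (f.injective (h.trans hB.symm))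
  exact single_zero_one_ne_zero h2 this.symm

theorem not_kArcTransitive_succ (h2 : (2 : ZMod n) ≠ 0) :
    ¬ KArcTransitive (ZArc (ThetaArc n) k) (k + 1) := by
  intro htr
  obtain ⟨f, hf, hfγ⟩ := htr _ _ (isKArc_constArc (k + 1)) (isKArc_jumpArc (ZMod.natCast_self k))
  have hfix : ∀ m : Fin (k + 1), f ((m : ℤ), 0) = ((m : ℤ), 0) := fun m => by
    simpa [constArc, jumpArc, show ¬k < (m : ℕ) by omega] using hfγ m.castSucc
  have hlast := (hfγ (Fin.last (k + 1))).symm.trans (hf.fix_outNeighbours h2 hfix).1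
  simp only [jumpArc, Fin.val_last, lt_add_iff_pos_right, zero_lt_one, if_true,
    Prod.mk.injEq] at hlast
  exact single_zero_one_ne_zero h2 hlast.2

end Rigidity

/-- For `3 ≤ n ≤ ∞` (here `n = 0` encodes `n = ∞` via `ZMod 0 = ℤ`), the
digraph `ℤ(Θ_n, k)` is `k`-arc-transitive but not `(k+1)`-arc-transitive;
specifically, every automorphism fixing the `k`-arc
`(0;0,…,0), (1;0,…,0), …, (k;0,…,0)` pointwise also fixes both out-neighbours
`(k+1; 0,0,…,0)` and `(k+1; 1,0,…,0)` of its terminal vertex. -/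
theorem stmt_13 (n : ℕ) (hn : n = 0 ∨ 3 ≤ n) (k : ℕ) [NeZero k] :
    KArcTransitive (ZArc (ThetaArc n) k) k ∧
    ¬ KArcTransitive (ZArc (ThetaArc n) k) (k + 1) ∧
    (∀ f : (ℤ × (ZMod k → ZMod n)) ≃ (ℤ × (ZMod k → ZMod n)),
      IsAut (ZArc (ThetaArc n) k) f →
      (∀ m : Fin (k + 1), f ((m : ℤ), fun _ => 0) = ((m : ℤ), fun _ => 0)) →
      f ((k : ℤ) + 1, fun _ => 0) = ((k : ℤ) + 1, fun _ => 0) ∧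
      f ((k : ℤ) + 1, fun j : ZMod k => if j = 0 then 1 else 0)
        = ((k : ℤ) + 1, fun j : ZMod k => if j = 0 then 1 else 0)) := by
  have h2 := ZMod.two_ne_zero_of_eq_zero_or_three_le hn
  have hsingle : (fun j : ZMod k => if j = 0 then (1 : ZMod n) else 0) = Pi.single 0 1 :=
    funext fun j => (Pi.single_apply 0 1 j).symm
  refine ⟨kArcTransitive_zArc_thetaArc, not_kArcTransitive_succ h2, fun f hf hfix => ?_⟩
  rw [hsingle]
  exact hf.fix_outNeighbours h2 hfix
end

section
/- Let Γ₁, Γ₂ be connected digraphs with Property Z, witnessed by digraph morphisms φ₁: Γ₁ → ⃗ℤ and φ₂: Γ₂ → ⃗ℤ, and let Γ be their direct fibre product. If Γ₁ and Γ₂ are both vertex-transitive then Γ is vertex-transitive, and if both are k-arc-transitive then Γ is k-arc-transitive. -/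
/-- The digraph with arc relation `E` is connected (its underlying undirected
graph is connected). -/
def DConnected {α : Type*} (E : α → α → Prop) : Prop :=
  ∀ u v, Relation.ReflTransGen (fun a b => E a b ∨ E b a) u v

lemma shift_aux {α : Type*} (E : α → α → Prop) (φ : α → ℤ)
    (hφ : ∀ u v, E u v → φ v = φ u + 1) (hc : DConnected E)
    (f : α ≃ α) (hf : IsAut E f) (x₀ : α) :
    ∀ v, φ (f v) - φ v = φ (f x₀) - φ x₀ := by
  intro v
  induction hc x₀ v with
  | refl => rfl
  | tail h₁ h₂ ih =>
    rcases h₂ with h | h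
    · have h1 := hφ _ _ h
      have h2 := hφ _ _ ((hf _ _).mp h)
      omega
    · have h1 := hφ _ _ h
      have h2 := hφ _ _ ((hf _ _).mp h)
      omega

/-- Let `Γ₁, Γ₂` be connected digraphs with Property Z witnessed by surjective
digraph morphisms `φ₁ : Γ₁ → ⃗ℤ`, `φ₂ : Γ₂ → ⃗ℤ`, and let `Γ` be their direct
fibre product, on vertex set `{(v₁,v₂) : φ₁ v₁ = φ₂ v₂}` with arcs taken
componentwise. If `Γ₁` and `Γ₂` are vertex-transitive so is `Γ`, and if both
are `k`-arc-transitive so is `Γ`. -/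
theorem stmt_15 {α β : Type*} (E₁ : α → α → Prop) (E₂ : β → β → Prop)
    (φ₁ : α → ℤ) (φ₂ : β → ℤ)
    (hφ₁ : ∀ u v, E₁ u v → φ₁ v = φ₁ u + 1) (hφ₁s : Function.Surjective φ₁)
    (hφ₂ : ∀ u v, E₂ u v → φ₂ v = φ₂ u + 1) (hφ₂s : Function.Surjective φ₂)
    (hc₁ : DConnected E₁) (hc₂ : DConnected E₂)
    (EΓ : {p : α × β // φ₁ p.1 = φ₂ p.2} → {p : α × β // φ₁ p.1 = φ₂ p.2} → Prop)
    (hEΓ : EΓ = fun p q => E₁ p.1.1 q.1.1 ∧ E₂ p.1.2 q.1.2) :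
    (KArcTransitive E₁ 0 → KArcTransitive E₂ 0 → KArcTransitive EΓ 0) ∧
    (∀ k : ℕ, KArcTransitive E₁ k → KArcTransitive E₂ k →
      KArcTransitive EΓ k) := by
  subst hEΓ
  have key : ∀ k, KArcTransitive E₁ k → KArcTransitive E₂ k →
      KArcTransitive (fun p q : {p : α × β // φ₁ p.1 = φ₂ p.2} =>
        E₁ p.1.1 q.1.1 ∧ E₂ p.1.2 q.1.2) k := by
    intro k h1 h2 γ₁ γ₂ hγ₁ hγ₂
    obtain ⟨f₁, hf₁, hm₁⟩ := h1 (fun m => (γ₁ m).1.1) (fun m => (γ₂ m).1.1)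
      (fun i => (hγ₁ i).1) (fun i => (hγ₂ i).1)
    obtain ⟨f₂, hf₂, hm₂⟩ := h2 (fun m => (γ₁ m).1.2) (fun m => (γ₂ m).1.2)
      (fun i => (hγ₁ i).2) (fun i => (hγ₂ i).2)
    have s₁ := shift_aux E₁ φ₁ hφ₁ hc₁ f₁ hf₁ (γ₁ 0).1.1
    have s₂ := shift_aux E₂ φ₂ hφ₂ hc₂ f₂ hf₂ (γ₁ 0).1.2
    have hcc : φ₁ (f₁ (γ₁ 0).1.1) - φ₁ (γ₁ 0).1.1
        = φ₂ (f₂ (γ₁ 0).1.2) - φ₂ (γ₁ 0).1.2 := by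
      have e0 := (γ₁ 0).2
      have e0' := (γ₂ 0).2
      have m1 := hm₁ 0
      have m2 := hm₂ 0
      rw [m1, m2]
      omega
    have hiff : ∀ p : α × β, φ₁ p.1 = φ₂ p.2 ↔
        φ₁ ((f₁.prodCongr f₂) p).1 = φ₂ ((f₁.prodCongr f₂) p).2 := by
      intro p
      have a := s₁ p.1
      have b := s₂ p.2
      simp only [Equiv.prodCongr_apply, Prod.map_fst, Prod.map_snd]
      omega
    refine ⟨(f₁.prodCongr f₂).subtypeEquiv hiff, ?_, ?_⟩
    · rintro ⟨⟨u1, u2⟩, hu⟩ ⟨⟨v1, v2⟩, hv⟩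
      simp only [Equiv.subtypeEquiv_apply, Equiv.prodCongr_apply, Prod.map]
      rw [hf₁ u1 v1, hf₂ u2 v2]
    · intro m
      apply Subtype.ext
      have m1 := hm₁ m
      have m2 := hm₂ m
      simp only [Equiv.subtypeEquiv_apply, Equiv.prodCongr_apply, Prod.map]
      exact Prod.ext m1 m2
  exact ⟨key 0, key⟩
end

section
/- The map θ defined by θ(i; x_0, …, x_{k-1}) = (i; x_{i'-1}, …, x_0, x_{k-1}, …, x_{i'}) where i' ≡ i (mod k), 0 ≤ i' ≤ k−1 (and θ(i; x_0,…,x_{k-1}) = (i; x_{k-1},…,x_0) when i' = 0), is an isomorphism from ℤ(Δ,k) to P(Δ,k), and θ² is the identity. -/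
/-- Arc relation of Praeger's digraph `P(Δ,k)` on `ℤ × V^k`:
`((i; x_0,…,x_{k-1}), (i+1; y_0,…,y_{k-1}))` is an arc iff
`(x_{k-1}, y_0)` is an arc of `Δ` and `x_l = y_{l+1}` for `l ≠ k-1`. -/
def PArc {V : Type*} (E : V → V → Prop) (k : ℕ) [NeZero k]
    (u v : ℤ × (ZMod k → V)) : Prop :=
  v.1 = u.1 + 1 ∧ E (u.2 (-1)) (v.2 0) ∧
    ∀ l : ZMod k, l ≠ -1 → u.2 l = v.2 (l + 1)

/-- The map `θ(i; x₀,…,x_{k-1}) = (i; x_{i'-1},…,x₀,x_{k-1},…,x_{i'})`, where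
`i' ≡ i (mod k)`, `0 ≤ i' ≤ k-1` (coordinate `m` of the image is
`x_{i'-1-m (mod k)}`), is an isomorphism `ℤ(Δ,k) → P(Δ,k)` with `θ² = id`. -/
theorem stmt_16 {V : Type*} (E : V → V → Prop) (hsymm : ∀ v w, E v w → E w v)
    (k : ℕ) [NeZero k]
    (θ : ℤ × (ZMod k → V) → ℤ × (ZMod k → V))
    (hθ : θ = fun p => (p.1, fun m : ZMod k => p.2 ((p.1 : ZMod k) - 1 - m))) :
    Function.Bijective θ ∧
    (∀ u v : ℤ × (ZMod k → V), ZArc E k u v ↔ PArc E k (θ u) (θ v)) ∧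
    θ ∘ θ = id := by
  subst hθ
  have hinv : Function.Involutive
      (fun p : ℤ × (ZMod k → V) =>
        (p.1, fun m : ZMod k => p.2 ((p.1 : ZMod k) - 1 - m))) := by
    intro p
    simp only
    refine Prod.ext rfl ?_
    funext m
    congr 1
    ring
  refine ⟨hinv.bijective, ?_, funext hinv⟩
  intro u v
  simp only [ZArc, PArc]
  constructor
  · rintro ⟨h1, h2⟩
    refine ⟨h1, ?_, ?_⟩
    · have hE := (h2 (u.1 : ZMod k)).2 rfl
      have e1 : (u.1 : ZMod k) - 1 - (-1) = (u.1 : ZMod k) := by ring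
      have e2 : (v.1 : ZMod k) - 1 - 0 = (u.1 : ZMod k) := by
        rw [h1]; push_cast; ring
      simpa [e1, e2] using hE
    · intro l hl
      have hj : (u.1 : ZMod k) ≠ (u.1 : ZMod k) - 1 - l := by
        intro h
        apply hl
        have : l = -1 := by linear_combination h
        exact this
      have heq := (h2 _).1 hj
      have e2 : (v.1 : ZMod k) - 1 - (l + 1) = (u.1 : ZMod k) - 1 - l := by
        rw [h1]; push_cast; ring
      simpa [e2] using heq
  · rintro ⟨h1, hE, heq⟩
    refine ⟨h1, fun j => ⟨?_, ?_⟩⟩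
    · intro hj
      have hl : (u.1 : ZMod k) - 1 - j ≠ -1 := by
        intro h
        apply hj
        linear_combination h
      have := heq _ hl
      have e1 : (u.1 : ZMod k) - 1 - ((u.1 : ZMod k) - 1 - j) = j := by ring
      have e2 : (v.1 : ZMod k) - 1 - ((u.1 : ZMod k) - 1 - j + 1) = j := by
        rw [h1]; push_cast; ring
      simpa [e1, e2] using this
    · intro hj
      subst hj
      have e1 : (u.1 : ZMod k) - 1 - (-1) = (u.1 : ZMod k) := by ring
      have e2 : (v.1 : ZMod k) - 1 - 0 = (u.1 : ZMod k) := by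
        rw [h1]; push_cast; ring
      simpa [e1, e2] using hE
end

section
/- If Δ is a Cayley digraph for a group H and ℤ(Δ,k) is connected, then the wreath-type group H^k ⋊ ℤ (where the generator of ℤ cyclically permutes the k factors of H^k and shifts the ℤ-coordinate) acts regularly on the vertices of ℤ(Δ,k); hence ℤ(Δ,k) is a Cayley digraph for H^k ⋊ ℤ. -/
/-- The cyclic-shift automorphism of `H^k`. -/
def shiftAut (k : ℕ) [NeZero k] (H : Type*) [Group H] :
    MulAut (ZMod k → H) where
  toFun x := fun j => x (j - 1)
  invFun x := fun j => x (j + 1)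
  left_inv x := by funext j; simp
  right_inv x := by funext j; simp
  map_mul' x y := rfl

section ShiftAut

variable {k : ℕ} [NeZero k] {H : Type*} [Group H]

lemma shiftAut_apply (a : ZMod k → H) (j : ZMod k) : shiftAut k H a j = a (j - 1) := rfl

lemma shiftAut_inv_apply (a : ZMod k → H) (j : ZMod k) : (shiftAut k H)⁻¹ a j = a (j + 1) := rfl

lemma shiftAut_zpow_apply (n : ℤ) (a : ZMod k → H) (j : ZMod k) :
    (shiftAut k H ^ n) a j = a (j - n) := by
  induction n using Int.induction_on generalizing a j with
  | zero => simp
  | succ m ih =>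
    rw [zpow_add_one, MulAut.mul_apply, ih, shiftAut_apply]
    push_cast
    ring_nf
  | pred m ih =>
    rw [zpow_sub_one, MulAut.mul_apply, ih, shiftAut_inv_apply]
    push_cast
    ring_nf

end ShiftAut

namespace ZArc

variable {k : ℕ}

section Shift

variable {V : Type*}

def shift (k : ℕ) (V : Type*) (n : ℤ) : Equiv.Perm (ℤ × (ZMod k → V)) where
  toFun p := (p.1 + n, fun j => p.2 (j - n))
  invFun p := (p.1 - n, fun j => p.2 (j + n))
  left_inv p := by ext <;> simp
  right_inv p := by ext <;> simp

@[simp]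
lemma shift_apply (n : ℤ) (p : ℤ × (ZMod k → V)) :
    shift k V n p = (p.1 + n, fun j => p.2 (j - n)) := rfl

@[simp]
lemma shift_symm_apply (n : ℤ) (p : ℤ × (ZMod k → V)) :
    (shift k V n).symm p = (p.1 - n, fun j => p.2 (j + n)) := rfl

def shiftHom (k : ℕ) (V : Type*) : Multiplicative ℤ →* Equiv.Perm (ℤ × (ZMod k → V)) where
  toFun n := shift k V n.toAdd
  map_one' := by ext p <;> simp
  map_mul' m n := by ext p <;> simp [sub_sub, add_comm, add_left_comm]

lemma map_shift_iff [NeZero k] (E : V → V → Prop) (n : ℤ) (u v : ℤ × (ZMod k → V)) :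
    ZArc E k (shift k V n u) (shift k V n v) ↔ ZArc E k u v := by
  simp only [ZArc, shift_apply, Int.cast_add]
  refine and_congr (by omega) ?_
  rw [← (Equiv.addRight (n : ZMod k)).forall_congr_right]
  simp

end Shift

section MulRight

variable {H : Type*} [Group H]

def mulRight (a : ZMod k → H) : Equiv.Perm (ℤ × (ZMod k → H)) where
  toFun p := (p.1, p.2 * a⁻¹)
  invFun p := (p.1, p.2 * a)
  left_inv p := by simp
  right_inv p := by simp

@[simp]
lemma mulRight_apply (a : ZMod k → H) (p : ℤ × (ZMod k → H)) :
    mulRight a p = (p.1, p.2 * a⁻¹) := rfl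

def mulRightHom : (ZMod k → H) →* Equiv.Perm (ℤ × (ZMod k → H)) where
  toFun := mulRight
  map_one' := by ext p <;> simp
  map_mul' a b := by ext p <;> simp [mul_assoc]

@[simp]
lemma mulRightHom_apply (a : ZMod k → H) : mulRightHom a = mulRight a := rfl

lemma map_mulRight_iff [NeZero k] {E : H → H → Prop} (hE : ∀ g h c, E (g * c) (h * c) ↔ E g h)
    (a : ZMod k → H) (u v : ℤ × (ZMod k → H)) :
    ZArc E k (mulRight a u) (mulRight a v) ↔ ZArc E k u v := by
  simp [ZArc, hE]

end MulRight

def action (k : ℕ) [NeZero k] (H : Type*) [Group H] :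
    ((ZMod k → H) ⋊[zpowersHom (MulAut (ZMod k → H)) (shiftAut k H)] Multiplicative ℤ) →*
      Equiv.Perm (ℤ × (ZMod k → H)) :=
  SemidirectProduct.lift mulRightHom (shiftHom k H) fun n => by
    ext a p j
    · simp [shiftHom]
    · simp [shiftHom, shiftAut_zpow_apply]

variable {H : Type*} [Group H] [NeZero k]
  (g : (ZMod k → H) ⋊[zpowersHom (MulAut (ZMod k → H)) (shiftAut k H)] Multiplicative ℤ)

lemma action_apply (p : ℤ × (ZMod k → H)) :
    action k H g p = mulRight g.left (shift k H g.right.toAdd p) := rfl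

lemma action_apply_eq_iff (u v : ℤ × (ZMod k → H)) :
    action k H g u = v ↔
      g = ⟨fun j => (v.2 j)⁻¹ * u.2 (j - (v.1 - u.1 : ℤ)), .ofAdd (v.1 - u.1)⟩ := by
  rw [action_apply]
  constructor <;> rintro rfl <;> ext <;> simp

lemma existsUnique_action_apply_eq (u v : ℤ × (ZMod k → H)) : ∃! g, action k H g u = v := by
  simp_rw [action_apply_eq_iff]
  exact existsUnique_eq

lemma map_action_iff {E : H → H → Prop} (hE : ∀ g h c, E (g * c) (h * c) ↔ E g h)
    (u v : ℤ × (ZMod k → H)) :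
    ZArc E k (action k H g u) (action k H g v) ↔ ZArc E k u v := by
  rw [action_apply, action_apply, map_mulRight_iff hE, map_shift_iff]

end ZArc

theorem stmt_17_general (H : Type*) [Group H] (S : Set H) (k : ℕ) [NeZero k]
    (E : H → H → Prop) (hE : E = fun g h => ∃ s ∈ S, h = s * g) :
    ∃ act : ((ZMod k → H) ⋊[zpowersHom (MulAut (ZMod k → H)) (shiftAut k H)]
        Multiplicative ℤ) →* Equiv.Perm (ℤ × (ZMod k → H)),
      (∀ g, ∀ u v : ℤ × (ZMod k → H),
        ZArc E k u v ↔ ZArc E k (act g u) (act g v)) ∧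
      (∀ u v : ℤ × (ZMod k → H), ∃! g, act g u = v) := by
  have hE_mul_right : ∀ g h c, E (g * c) (h * c) ↔ E g h := by
    simp [hE, ← mul_assoc]
  exact ⟨ZArc.action k H, fun g u v => (ZArc.map_action_iff g hE_mul_right u v).symm,
    ZArc.existsUnique_action_apply_eq⟩

/-- If `Δ` is a Cayley digraph of a group `H` (with connection set `S`) and
`ℤ(Δ,k)` is connected, then the group `H^k ⋊ ℤ`, where the generator of `ℤ`
cyclically permutes the factors of `H^k`, acts regularly on `ℤ(Δ,k)` by
automorphisms; hence `ℤ(Δ,k)` is a Cayley digraph of `H^k ⋊ ℤ`. -/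
theorem stmt_17 (H : Type*) [Group H] (S : Set H) (k : ℕ) [NeZero k]
    (E : H → H → Prop) (hE : E = fun g h => ∃ s ∈ S, h = s * g)
    (hconn : DConnected (ZArc E k)) :
    ∃ act : ((ZMod k → H) ⋊[zpowersHom (MulAut (ZMod k → H)) (shiftAut k H)]
        Multiplicative ℤ) →* Equiv.Perm (ℤ × (ZMod k → H)),
      (∀ g, ∀ u v : ℤ × (ZMod k → H),
        ZArc E k u v ↔ ZArc E k (act g u) (act g v)) ∧
      (∀ u v : ℤ × (ZMod k → H), ∃! g, act g u = v) :=
  stmt_17_general H S k E hE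
end
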